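/- The number of (isomorphism classes of) trees on n vertices that possess a symmetrical edge is at most the number of rooted trees on n/2 vertices when n is even, and is zero when n is odd. -/

import Mathlib

/-- The number of isomorphism classes of trees on n vertices possessing a symmetrical
edge (an edge whose endpoints are swapped by some automorphism). -/
noncomputable def numSymEdgeTrees (n : ℕ) : ℕ :=
  Nat.card (Quot (fun G H : {G : SimpleGraph (Fin n) //
      G.IsTree ∧ ∃ u v : Fin n, G.Adj u v ∧ ∃ Φ : G ≃g G, Φ u = v ∧ Φ v = u} =>
    Nonempty (G.1 ≃g H.1)))

/-- The number of isomorphism classes of rooted trees on m vertices. -/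
noncomputable def numRootedTrees (m : ℕ) : ℕ :=
  Nat.card (Quot (fun P Q : {P : SimpleGraph (Fin m) × Fin m // P.1.IsTree} =>
    ∃ e : P.1.1 ≃g Q.1.1, e P.1.2 = Q.1.2))

/-!
Deleting a symmetrical edge `uv` of a tree `T` leaves two components, and an automorphism swapping
`u` and `v` exchanges them. Hence `T` is two copies of the rooted tree (component of `u`, `u`)
joined by an edge between the roots, so `T` has an even number of vertices. Choosing such a rooted
tree for every isomorphism class of `T` is injective, since isomorphic rooted trees give isomorphic
doubles; no uniqueness of the symmetrical edge is needed.
-/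

theorem card_quot_le_card_quot {α β : Type*} {r : α → α → Prop}
    {s : β → β → Prop} [Finite β] (hs : Equivalence s) (f : α → β)
    (hf : ∀ a b, s (f a) (f b) → r a b) : Nat.card (Quot r) ≤ Nat.card (Quot s) := by
  refine Nat.card_le_card_of_injective (fun q => Quot.mk s (f q.out)) fun q q' h => ?_
  rw [← Quot.out_eq q, ← Quot.out_eq q']
  exact Quot.sound (hf _ _ (hs.eqvGen_iff.mp (Quot.eqvGen_exact h)))

namespace SimpleGraph

variable {V W : Type*}

def rootDouble (G : SimpleGraph V) (r : V) : SimpleGraph (V ⊕ V) :=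
  (G ⊕g G) ⊔ edge (.inl r) (.inr r)

section RootDouble

variable {G : SimpleGraph V} {r : V}

@[simp] lemma rootDouble_adj_inl_inl {a b : V} :
    (G.rootDouble r).Adj (.inl a) (.inl b) ↔ G.Adj a b := by
  simp [rootDouble, edge_adj]

@[simp] lemma rootDouble_adj_inr_inr {a b : V} :
    (G.rootDouble r).Adj (.inr a) (.inr b) ↔ G.Adj a b := by
  simp [rootDouble, edge_adj]

@[simp] lemma rootDouble_adj_inl_inr {a b : V} :
    (G.rootDouble r).Adj (.inl a) (.inr b) ↔ a = r ∧ b = r := by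
  simp [rootDouble, edge_adj]

@[simp] lemma rootDouble_adj_inr_inl {a b : V} :
    (G.rootDouble r).Adj (.inr a) (.inl b) ↔ a = r ∧ b = r := by
  simp [rootDouble, edge_adj]

def Iso.rootDouble {G' : SimpleGraph W} (e : G ≃g G') {r' : W} (hr : e r = r') :
    G.rootDouble r ≃g G'.rootDouble r' where
  toEquiv := e.toEquiv.sumCongr e.toEquiv
  map_rel_iff' := by
    subst hr
    rintro (a | a) (b | b) <;> simp [e.map_adj_iff]

end RootDouble

def Iso.deleteEdge {G : SimpleGraph V} {G' : SimpleGraph W} (θ : G ≃g G') (u v : V) :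
    G.deleteEdges {s(u, v)} ≃g G'.deleteEdges {s(θ u, θ v)} where
  toEquiv := θ.toEquiv
  map_rel_iff' := by
    intro a b
    simp [θ.injective.eq_iff, θ.map_adj_iff]

lemma Iso.reachable_deleteEdges_iff {G : SimpleGraph V} {G' : SimpleGraph W} (θ : G ≃g G')
    {u v a b : V} :
    (G'.deleteEdges {s(θ u, θ v)}).Reachable (θ a) (θ b) ↔
      (G.deleteEdges {s(u, v)}).Reachable a b :=
  (θ.deleteEdge u v).reachable_iff

lemma equivalence_rootedIso : Equivalence fun P Q : SimpleGraph V × V =>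
    ∃ e : P.1 ≃g Q.1, e P.2 = Q.2 where
  refl _ := ⟨.refl, rfl⟩
  symm := fun ⟨e, he⟩ => ⟨e.symm, by rw [← he, e.symm_apply_apply]⟩
  trans := fun ⟨e, he⟩ ⟨f, hf⟩ => ⟨e.trans f, by simp [he, hf]⟩

section EdgeSide

variable {T : SimpleGraph V} {u v : V}

def edgeSide (T : SimpleGraph V) (u v : V) : Set V :=
  ((T.deleteEdges {s(u, v)}).connectedComponentMk u).supp

lemma mem_edgeSide {w : V} : w ∈ T.edgeSide u v ↔ (T.deleteEdges {s(u, v)}).Reachable w u := by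
  simp [edgeSide, ConnectedComponent.eq]

lemma mem_edgeSide_self : u ∈ T.edgeSide u v := mem_edgeSide.mpr .rfl

lemma Connected.reachable_deleteEdges_or (hT : T.Connected) (huv : T.Adj u v) (w : V) :
    (T.deleteEdges {s(u, v)}).Reachable w u ∨ (T.deleteEdges {s(u, v)}).Reachable w v := by
  classical
  obtain ⟨p, hp⟩ := hT.exists_isPath w u
  by_cases he : s(u, v) ∈ p.edges
  · have hv := p.snd_mem_support_of_mem_edges he
    have hu := Walk.endpoint_notMem_support_takeUntil hp hv huv.ne
    exact .inr ⟨(p.takeUntil v hv).toDeleteEdges _ fun e he' h => by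
      subst h; exact hu ((p.takeUntil v hv).fst_mem_support_of_mem_edges he')⟩
  · exact .inl ⟨p.toDeleteEdges _ fun e he' h => by subst h; exact he (by simpa using he')⟩

lemma IsTree.not_reachable_deleteEdges (hT : T.IsTree) (huv : T.Adj u v) :
    ¬ (T.deleteEdges {s(u, v)}).Reachable u v :=
  isBridge_iff.mp (isAcyclic_iff_forall_adj_isBridge.mp hT.isAcyclic huv)

lemma IsTree.eq_of_adj_of_reachable_deleteEdges (hT : T.IsTree) (huv : T.Adj u v) {a b : V}
    (ha : (T.deleteEdges {s(u, v)}).Reachable a u) (hb : (T.deleteEdges {s(u, v)}).Reachable b v)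
    (hab : T.Adj a b) : a = u ∧ b = v := by
  by_cases he : s(a, b) = s(u, v)
  · rcases Sym2.eq_iff.mp he with h | ⟨rfl, rfl⟩
    · exact h
    · exact absurd ha.symm (hT.not_reachable_deleteEdges huv)
  · have hD : (T.deleteEdges {s(u, v)}).Adj a b := by simpa [hab] using he
    exact absurd (ha.symm.trans (hD.reachable.trans hb)) (hT.not_reachable_deleteEdges huv)

lemma IsTree.induce_edgeSide (hT : T.IsTree) : (T.induce (T.edgeSide u v)).IsTree :=
  ⟨(ConnectedComponent.maximal_connected_induce_supp _).prop.mono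
    (comap_monotone _ (deleteEdges_le _)), hT.isAcyclic.induce _⟩

section Swap

variable {Φ : T ≃g T} (hΦu : Φ u = v) (hΦv : Φ v = u)
include hΦu hΦv

lemma reachable_deleteEdges_apply_iff {a b : V} :
    (T.deleteEdges {s(u, v)}).Reachable (Φ a) (Φ b) ↔
      (T.deleteEdges {s(u, v)}).Reachable a b := by
  have h := Φ.reachable_deleteEdges_iff (u := u) (v := v) (a := a) (b := b)
  rwa [hΦu, hΦv, Sym2.eq_swap] at h

lemma reachable_apply_iff_mem_edgeSide (w : V) :
    (T.deleteEdges {s(u, v)}).Reachable (Φ w) v ↔ w ∈ T.edgeSide u v := by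
  simpa [hΦu, mem_edgeSide] using reachable_deleteEdges_apply_iff hΦu hΦv (a := w) (b := u)

end Swap

section SymmetricalEdge

variable (hT : T.IsTree) (huv : T.Adj u v) {Φ : T ≃g T} (hΦu : Φ u = v) (hΦv : Φ v = u)
include hT huv hΦu hΦv

lemma bijective_sumElim_edgeSide :
    Function.Bijective
      (Sum.elim ((↑) : T.edgeSide u v → V) (Φ ∘ ((↑) : T.edgeSide u v → V))) := by
  have hside := reachable_apply_iff_mem_edgeSide hΦu hΦv
  refine ⟨Subtype.val_injective.sumElim (Φ.injective.comp Subtype.val_injective) ?_, ?_⟩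
  · rintro ⟨a, ha⟩ ⟨b, hb⟩ (hab : a = Φ b)
    exact hT.not_reachable_deleteEdges huv
      ((mem_edgeSide.mp ha).symm.trans (hab ▸ (hside b).mpr hb))
  · intro w
    rcases hT.connected.reachable_deleteEdges_or huv w with h | h
    · exact ⟨.inl ⟨w, mem_edgeSide.mpr h⟩, rfl⟩
    · exact ⟨.inr ⟨Φ.symm w, (hside _).mp (by simpa using h)⟩, by simp⟩

noncomputable def rootDoubleEdgeSideIso :
    (T.induce (T.edgeSide u v)).rootDouble ⟨u, mem_edgeSide_self⟩ ≃g T where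
  toEquiv := .ofBijective _ (bijective_sumElim_edgeSide hT huv hΦu hΦv)
  map_rel_iff' := by
    have hside := reachable_apply_iff_mem_edgeSide hΦu hΦv
    have hcross {a b : V} (ha : a ∈ T.edgeSide u v) (hb : b ∈ T.edgeSide u v) :
        T.Adj a (Φ b) ↔ a = u ∧ b = u := by
      refine ⟨fun hab => ?_, fun ⟨ha, hb⟩ => by rwa [ha, hb, hΦu]⟩
      obtain ⟨rfl, h⟩ := hT.eq_of_adj_of_reachable_deleteEdges huv (mem_edgeSide.mp ha)
        ((hside b).mpr hb) hab
      exact ⟨rfl, Φ.injective (h.trans hΦu.symm)⟩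
    rintro (⟨a, ha⟩ | ⟨a, ha⟩) (⟨b, hb⟩ | ⟨b, hb⟩)
    · simp
    · simpa using hcross ha hb
    · simpa [adj_comm] using hcross hb ha
    · simp [Φ.map_adj_iff]

lemma two_mul_card_edgeSide [Finite V] : 2 * Nat.card (T.edgeSide u v) = Nat.card V := by
  rw [← Nat.card_congr (rootDoubleEdgeSideIso hT huv hΦu hΦv).toEquiv, Nat.card_sum, two_mul]

lemma exists_rootDouble_iso [Finite V] {m : ℕ} (hm : Nat.card V = 2 * m) :
    ∃ (R : SimpleGraph (Fin m)) (r : Fin m), R.IsTree ∧ Nonempty (R.rootDouble r ≃g T) := by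
  have hcard : Nat.card (T.edgeSide u v) = m := by
    have := two_mul_card_edgeSide hT huv hΦu hΦv
    omega
  let κ := Finite.equivFinOfCardEq hcard
  refine ⟨_, κ ⟨u, mem_edgeSide_self⟩, (Iso.map κ _).isTree_iff.mp hT.induce_edgeSide,
    ⟨((Iso.map κ _).symm.rootDouble ?_).trans (rootDoubleEdgeSideIso hT huv hΦu hΦv)⟩⟩
  simp

end SymmetricalEdge

end EdgeSide

end SimpleGraph

open SimpleGraph

/-- The number of trees on n vertices with a symmetrical edge is at most
the number of rooted trees on n/2 vertices when n is even, and is zero when n is odd. -/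
theorem stmt19 (n : ℕ) :
    (Even n → numSymEdgeTrees n ≤ numRootedTrees (n / 2)) ∧
    (Odd n → numSymEdgeTrees n = 0) := by
  constructor
  · intro hn
    have hroot : ∀ G : {G : SimpleGraph (Fin n) //
        G.IsTree ∧ ∃ u v : Fin n, G.Adj u v ∧ ∃ Φ : G ≃g G, Φ u = v ∧ Φ v = u},
        ∃ P : {P : SimpleGraph (Fin (n / 2)) × Fin (n / 2) // P.1.IsTree},
          Nonempty (P.1.1.rootDouble P.1.2 ≃g G.1) := by
      rintro ⟨G, hT, u, v, huv, Φ, hΦu, hΦv⟩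
      obtain ⟨R, r, hR, e⟩ := exists_rootDouble_iso hT huv hΦu hΦv
        ((Nat.card_fin n).trans (Nat.two_mul_div_two_of_even hn).symm)
      exact ⟨⟨(R, r), hR⟩, e⟩
    choose F hF using hroot
    exact card_quot_le_card_quot (equivalence_rootedIso.comap Subtype.val) F
      fun G H ⟨e, he⟩ => ⟨(hF G).some.symm.trans ((e.rootDouble he).trans (hF H).some)⟩
  · intro hn
    refine Nat.card_eq_zero.mpr (.inl ⟨Quot.ind ?_⟩)
    rintro ⟨G, hT, u, v, huv, Φ, hΦu, hΦv⟩
    have hcard := two_mul_card_edgeSide hT huv hΦu hΦv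
    rw [Nat.card_fin] at hcard
    exact Nat.not_even_iff_odd.mpr hn ⟨_, hcard.symm.trans (two_mul _)⟩
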